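/- Let R be a zero-sum-free integral commutative semiring and M an R-convex monoid. For m₁, m₂ ∈ M, the product of invertible supports satisfies Isupp(m₁)·Isupp(m₂) ⊆ Isupp(m₁·m₂). Moreover, if m₁ is invertible then m₁·Isupp(m₂) = Isupp(m₁·m₂). -/
import Mathlib

open Finsupp
open scoped Pointwise

/-- `p` is a finitely supported `R`-distribution: its values sum to `1`. -/
def IsDist {R X : Type*} [CommSemiring R] (p : X →₀ R) : Prop :=
  p.sum (fun _ r => r) = 1

/-- Convolution: `(q ∗ p)(m) = ∑_{g₂·g₁ = m} q(g₂) p(g₁)`. -/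
noncomputable def dconv {R M : Type*} [CommSemiring R] [Monoid M]
    (q p : M →₀ R) : M →₀ R :=
  q.sum fun g₂ b => p.sum fun g₁ a => Finsupp.single (g₂ * g₁) (b * a)

/-- The invertible support of `m`:
`Isupp(m) = {m' ∈ M* : ∃ P ∈ D_R(M), pm(P) = m, P(m') ≠ 0}`. -/
def Isupp {R M : Type*} [CommSemiring R] [Monoid M]
    (pm : (M →₀ R) → M) (m : M) : Set M :=
  {m' | IsUnit m' ∧ ∃ P : M →₀ R, IsDist P ∧ pm P = m ∧ P m' ≠ 0}

private lemma sum_eq_zero_of_zsf {R : Type*} [CommSemiring R]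
    (hzsf : ∀ a b : R, a + b = 0 → a = 0 ∧ b = 0)
    {ι : Type*} {s : Finset ι} {f : ι → R} (h : ∑ i ∈ s, f i = 0) :
    ∀ i ∈ s, f i = 0 := by
  induction s using Finset.cons_induction with
  | empty => simp
  | cons a s ha ih =>
    rw [Finset.sum_cons] at h
    obtain ⟨h1, h2⟩ := hzsf _ _ h
    intro i hi
    rcases Finset.mem_cons.mp hi with rfl | hi
    · exact h1
    · exact ih h2 i hi

private lemma dconv_isDist {R M : Type*} [CommSemiring R] [Monoid M]
    {q p : M →₀ R} (hq : IsDist q) (hp : IsDist p) : IsDist (dconv q p) := by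
  unfold IsDist dconv at *
  rw [Finsupp.sum_sum_index (fun _ => rfl) (fun _ _ _ => rfl)]
  have key : ∀ (x : M) (b : R),
      ((p.sum fun g₁ a => Finsupp.single (x * g₁) (b * a)).sum fun _ r => r)
        = b * p.sum (fun _ a => a) := by
    intro x b
    rw [Finsupp.sum_sum_index (fun _ => rfl) (fun _ _ _ => rfl)]
    simp only [Finsupp.sum_single_index]
    rw [Finsupp.mul_sum]
  rw [Finsupp.sum_congr (g2 := fun x b => b * p.sum fun _ a => a) (fun x _ => key x (q x)),
    show (p.sum fun _ a => a) = 1 from hp]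
  simp only [mul_one]
  exact hq

private lemma dconv_apply' {R M : Type*} [CommSemiring R] [Monoid M]
    (q p : M →₀ R) (x : M) :
    dconv q p x = ∑ g₂ ∈ q.support, ∑ g₁ ∈ p.support,
      (Finsupp.single (g₂ * g₁) (q g₂ * p g₁)) x := by
  rw [dconv]
  simp only [Finsupp.sum_apply, Finsupp.sum, Finset.sum_apply']

private lemma single_isDist {R M : Type*} [CommSemiring R] (m : M) :
    IsDist (Finsupp.single m (1 : R)) :=
  Finsupp.sum_single_index rfl

/-- In an `R`-convex monoid over a zero-sum-free integral commutative semiring,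
`Isupp(m₁) · Isupp(m₂) ⊆ Isupp(m₁ · m₂)`; and if `m₁` is invertible,
`m₁ · Isupp(m₂) = Isupp(m₁ · m₂)`. -/
theorem Isupp_mul {R M : Type*} [CommSemiring R] [Monoid M]
    (hzsf : ∀ a b : R, a + b = 0 → a = 0 ∧ b = 0)
    (hint : ∀ a b : R, a * b = 0 → a = 0 ∨ b = 0)
    (pm : (M →₀ R) → M)
    (hδ : ∀ m : M, pm (Finsupp.single m 1) = m)
    (hμ : ∀ Q : (M →₀ R) →₀ R, IsDist Q → (∀ p ∈ Q.support, IsDist p) →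
      pm (Q.sum fun p r => r • p) = pm (Finsupp.mapDomain pm Q))
    (hmul : ∀ p q : M →₀ R, IsDist p → IsDist q → pm (dconv q p) = pm q * pm p)
    (m₁ m₂ : M) :
    Isupp pm m₁ * Isupp pm m₂ ⊆ Isupp pm (m₁ * m₂) ∧
    (IsUnit m₁ → (fun x => m₁ * x) '' Isupp pm m₂ = Isupp pm (m₁ * m₂)) := by
  have part1 : Isupp pm m₁ * Isupp pm m₂ ⊆ Isupp pm (m₁ * m₂) := by
    rintro x hx
    rw [Set.mem_mul] at hx
    obtain ⟨a, ⟨hua, P₁, hP₁, hpm₁, hne₁⟩, b, ⟨hub, P₂, hP₂, hpm₂, hne₂⟩, rfl⟩ := hx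
    refine ⟨hua.mul hub, dconv P₁ P₂, dconv_isDist hP₁ hP₂,
      by rw [hmul P₂ P₁ hP₂ hP₁, hpm₁, hpm₂], ?_⟩
    intro h0
    rw [dconv_apply'] at h0
    have h1 := sum_eq_zero_of_zsf hzsf h0 a (Finsupp.mem_support_iff.mpr hne₁)
    have h2 := sum_eq_zero_of_zsf hzsf h1 b (Finsupp.mem_support_iff.mpr hne₂)
    rw [Finsupp.single_eq_same] at h2
    rcases hint _ _ h2 with h | h
    · exact hne₁ h
    · exact hne₂ h
  refine ⟨part1, fun hu₁ => Set.Subset.antisymm ?_ ?_⟩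
  · rintro _ ⟨y, hy, rfl⟩
    obtain ⟨huy, P₂, hP₂, hpm₂, hne₂⟩ := hy
    have h10 : (1 : R) ≠ 0 := by
      intro h
      have : Subsingleton R := subsingleton_of_zero_eq_one h.symm
      exact hne₂ (Subsingleton.elim _ _)
    exact part1 (Set.mul_mem_mul ⟨hu₁, Finsupp.single m₁ 1, single_isDist m₁, hδ m₁,
      by simpa using h10⟩ ⟨huy, P₂, hP₂, hpm₂, hne₂⟩)
  · rintro x ⟨hux, P, hP, hpm, hne⟩
    set u := hu₁.unit with hu
    have hinj : Function.Injective (fun g => (↑u⁻¹ : M) * g) := by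
      intro a b h
      simpa [← mul_assoc] using congrArg (fun z => (↑u : M) * z) h
    have hQeq : dconv (Finsupp.single (↑u⁻¹ : M) 1) P
        = Finsupp.mapDomain (fun g => (↑u⁻¹ : M) * g) P := by
      rw [dconv, Finsupp.sum_single_index (by simp), Finsupp.mapDomain]
      simp only [one_mul]
    refine ⟨(↑u⁻¹ : M) * x, ⟨(u⁻¹).isUnit.mul hux,
      dconv (Finsupp.single (↑u⁻¹ : M) 1) P,
      dconv_isDist (single_isDist _) hP, ?_, ?_⟩, ?_⟩
    · rw [hmul P _ hP (single_isDist _), hδ, hpm, ← mul_assoc,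
        show (↑u⁻¹ : M) * m₁ = 1 by rw [← hu₁.unit_spec]; exact u.inv_mul, one_mul]
    · rw [hQeq, Finsupp.mapDomain_apply hinj]
      exact hne
    · show m₁ * ((↑u⁻¹ : M) * x) = x
      rw [← mul_assoc, show m₁ * (↑u⁻¹ : M) = 1 by rw [← hu₁.unit_spec]; exact u.mul_inv,
        one_mul]
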